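/- Let Γ be a finite simple graph, z ∈ V(Γ), and A_1, A_2 ⊆ V(Γ) vertex subsets with A_1 ∩ A_2 = {z}. Let S_1, S_2 ⊆ V(Γ) with A_1 ⊆ S_1, A_2 ⊆ S_2, |S_1 \ A_1| = |S_2 \ A_2| = 3, S_1 ∩ S_2 = {z} ∪ ((S_1 \ A_1) ∩ (S_2 \ A_2)), and (S_1 \ A_1) ∩ (S_2 \ A_2) ≠ ∅. Assume that the pairs (S_1,A_1) and (S_2,A_2) are 3/5-neutral, that every vertex of S_1 \ A_1 is joined by a path inside the induced subgraph Γ|_{S_1 \ {z}} to some vertex of A_1 \ {z}, and that every vertex of S_2 \ A_2 is joined by a path inside the induced subgraph Γ|_{S_2 \ {z}} to some vertex of A_2 \ {z}. Then the pair (S_1 ∪ S_2, A_1 ∪ A_2) is 3/5-rigid. -/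
import Mathlib


open Finset

variable {V : Type*} [Fintype V] [DecidableEq V]

/-- The number of edges of `Γ` with both endpoints in `A` and at least one endpoint
in `A \ B`; this is `e(A,B)` from the paper. -/
noncomputable def edgeCount (Γ : SimpleGraph V) (A B : Finset V) : ℕ :=
  Nat.card {e : Sym2 V // e ∈ Γ.edgeSet ∧ (∀ x ∈ e, x ∈ A) ∧ ∃ x ∈ e, x ∈ A ∧ x ∉ B}

/-- `f_α(A,B) = v(A,B) - α ⬝ e(A,B)`. -/
noncomputable def fW (Γ : SimpleGraph V) (α : ℝ) (A B : Finset V) : ℝ :=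
  ((A \ B).card : ℝ) - α * (edgeCount Γ A B : ℝ)

/-- The pair `(A,B)` is `α`-safe. -/
def IsSafe (Γ : SimpleGraph V) (α : ℝ) (A B : Finset V) : Prop :=
  ∀ C : Finset V, B ⊂ C → C ⊆ A → 0 < fW Γ α C B

/-- The pair `(A,B)` is `α`-rigid. -/
def IsRigid (Γ : SimpleGraph V) (α : ℝ) (A B : Finset V) : Prop :=
  ∀ C : Finset V, B ⊆ C → C ⊂ A → fW Γ α A C < 0

/-- The pair `(A,B)` is `α`-neutral. -/
def IsNeutral (Γ : SimpleGraph V) (α : ℝ) (A B : Finset V) : Prop :=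
  (∀ C : Finset V, B ⊂ C → C ⊂ A → 0 < fW Γ α C B) ∧ fW Γ α A B = 0

/-- The set of edges counted by `edgeCount`. -/
def ES (Γ : SimpleGraph V) (A B : Finset V) : Set (Sym2 V) :=
  {e | e ∈ Γ.edgeSet ∧ (∀ x ∈ e, x ∈ A) ∧ ∃ x ∈ e, x ∈ A ∧ x ∉ B}

lemma mem_ES {Γ : SimpleGraph V} {A B : Finset V} {e : Sym2 V} :
    e ∈ ES Γ A B ↔ e ∈ Γ.edgeSet ∧ (∀ x ∈ e, x ∈ A) ∧ ∃ x ∈ e, x ∈ A ∧ x ∉ B :=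
  Iff.rfl

lemma edgeCount_eq_ncard (Γ : SimpleGraph V) (A B : Finset V) :
    edgeCount Γ A B = (ES Γ A B).ncard := by
  rw [edgeCount, ← Nat.card_coe_set_eq]
  rfl

lemma ES_union {Γ : SimpleGraph V} {A B C : Finset V} (hBC : B ⊆ C) (hCA : C ⊆ A) :
    ES Γ A B = ES Γ A C ∪ ES Γ C B := by
  ext e
  simp only [mem_ES, Set.mem_union]
  constructor
  · rintro ⟨hE, hA, x, hxe, hxA, hxB⟩
    by_cases h : ∀ y ∈ e, y ∈ C
    · exact Or.inr ⟨hE, h, x, hxe, h x hxe, hxB⟩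
    · push_neg at h
      obtain ⟨y, hye, hyC⟩ := h
      exact Or.inl ⟨hE, hA, y, hye, hA y hye, hyC⟩
  · rintro (⟨hE, hA, x, hxe, hxA, hxC⟩ | ⟨hE, hC, x, hxe, hxC, hxB⟩)
    · exact ⟨hE, hA, x, hxe, hxA, fun hxB => hxC (hBC hxB)⟩
    · exact ⟨hE, fun y hy => hCA (hC y hy), x, hxe, hCA hxC, hxB⟩

lemma ES_disjoint {Γ : SimpleGraph V} {A B C : Finset V} :
    Disjoint (ES Γ A C) (ES Γ C B) := by
  rw [Set.disjoint_left]
  rintro e ⟨hE, hA, x, hxe, hxA, hxC⟩ ⟨hE', hC, _⟩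
  exact hxC (hC x hxe)

lemma edgeCount_add {Γ : SimpleGraph V} {A B C : Finset V} (hBC : B ⊆ C) (hCA : C ⊆ A) :
    edgeCount Γ A B = edgeCount Γ A C + edgeCount Γ C B := by
  rw [edgeCount_eq_ncard, edgeCount_eq_ncard, edgeCount_eq_ncard, ES_union hBC hCA,
    Set.ncard_union_eq ES_disjoint (Set.toFinite _) (Set.toFinite _)]

lemma fW_add {Γ : SimpleGraph V} (α : ℝ) {A B C : Finset V} (hBC : B ⊆ C) (hCA : C ⊆ A) :
    fW Γ α A B = fW Γ α A C + fW Γ α C B := by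
  have hU : A \ B = (A \ C) ∪ (C \ B) := by
    ext x
    simp only [Finset.mem_sdiff, Finset.mem_union]
    constructor
    · rintro ⟨hxA, hxB⟩
      by_cases h : x ∈ C
      · exact Or.inr ⟨h, hxB⟩
      · exact Or.inl ⟨hxA, h⟩
    · rintro (⟨hxA, hxC⟩ | ⟨hxC, hxB⟩)
      · exact ⟨hxA, fun h => hxC (hBC h)⟩
      · exact ⟨hCA hxC, hxB⟩
  have hD : Disjoint (A \ C) (C \ B) := by
    rw [Finset.disjoint_left]
    intro x hx hx'
    exact (Finset.mem_sdiff.1 hx).2 (Finset.mem_sdiff.1 hx').1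
  have hcard : (A \ B).card = (A \ C).card + (C \ B).card := by
    rw [hU, Finset.card_union_of_disjoint hD]
  simp only [fW, hcard, edgeCount_add hBC hCA]
  push_cast
  ring

lemma edgeCount_self {Γ : SimpleGraph V} (A : Finset V) : edgeCount Γ A A = 0 := by
  rw [edgeCount_eq_ncard]
  convert Set.ncard_empty (Sym2 V)
  ext e
  simp only [mem_ES, Set.mem_empty_iff_false, iff_false, not_and]
  rintro _ _ ⟨x, hxe, hxA, hxA'⟩
  exact hxA' hxA

lemma fW_self {Γ : SimpleGraph V} (α : ℝ) (A : Finset V) : fW Γ α A A = 0 := by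
  simp [fW, edgeCount_self]

lemma fW_flip_neg {Γ : SimpleGraph V} {α : ℝ} {S A C : Finset V} (hn : IsNeutral Γ α S A)
    (hAC : A ⊆ C) (hCS : C ⊆ S) (h1 : C ≠ A) (h2 : C ≠ S) :
    fW Γ α S C < 0 := by
  have hadd := fW_add (Γ := Γ) α hAC hCS
  have hpos := hn.1 C (Finset.ssubset_iff_subset_ne.2 ⟨hAC, fun h => h1 h.symm⟩)
    (Finset.ssubset_iff_subset_ne.2 ⟨hCS, h2⟩)
  have h0 := hn.2
  linarith

/-- Corollary, Item 2, of the paper: two 3/5-neutral 3-vertex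
extensions of `A₁` and `A₂` (merged at `z`), sharing at least one new vertex,
give a 3/5-rigid pair `(S₁ ∪ S₂, A₁ ∪ A₂)`. -/
theorem stmt12 (Γ : SimpleGraph V) (z : V) (A1 A2 S1 S2 : Finset V)
    (hint : A1 ∩ A2 = {z}) (hA1S1 : A1 ⊆ S1) (hA2S2 : A2 ⊆ S2)
    (hc1 : (S1 \ A1).card = 3) (hc2 : (S2 \ A2).card = 3)
    (hSS : S1 ∩ S2 = {z} ∪ ((S1 \ A1) ∩ (S2 \ A2)))
    (hne : ((S1 \ A1) ∩ (S2 \ A2)).Nonempty)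
    (hn1 : IsNeutral Γ (3/5) S1 A1) (hn2 : IsNeutral Γ (3/5) S2 A2)
    (hp1 : ∀ v ∈ S1 \ A1, ∃ w ∈ A1, w ≠ z ∧
      ∃ p : Γ.Walk v w, ∀ u ∈ p.support, u ∈ S1 ∧ u ≠ z)
    (hp2 : ∀ v ∈ S2 \ A2, ∃ w ∈ A2, w ≠ z ∧
      ∃ p : Γ.Walk v w, ∀ u ∈ p.support, u ∈ S2 ∧ u ≠ z) :
    IsRigid Γ (3/5) (S1 ∪ S2) (A1 ∪ A2) := by
  intro C hAC hCS
  set C1 := C ∩ S1 with hC1def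
  set C2 := (C ∪ S1) ∩ S2 with hC2def
  have hA1C : A1 ⊆ C := Finset.union_subset_iff.1 hAC |>.1
  have hA2C : A2 ⊆ C := Finset.union_subset_iff.1 hAC |>.2
  have hA1C1 : A1 ⊆ C1 := Finset.subset_inter hA1C hA1S1
  have hC1S1 : C1 ⊆ S1 := Finset.inter_subset_right
  have hA2C2 : A2 ⊆ C2 :=
    Finset.subset_inter (hA2C.trans Finset.subset_union_left) hA2S2
  have hC2S2 : C2 ⊆ S2 := Finset.inter_subset_right
  -- vertex decomposition
  have hVU : (S1 ∪ S2) \ C = (S1 \ C1) ∪ (S2 \ C2) := by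
    rw [hC1def, hC2def]
    ext x
    simp only [Finset.mem_sdiff, Finset.mem_union, Finset.mem_inter]
    tauto
  have hVdisj : Disjoint (S1 \ C1) (S2 \ C2) := by
    rw [Finset.disjoint_left]
    intro x hx hx'
    rw [hC1def] at hx
    rw [hC2def] at hx'
    simp only [Finset.mem_sdiff, Finset.mem_inter, Finset.mem_union] at hx hx'
    tauto
  have hVcard : ((S1 ∪ S2) \ C).card = (S1 \ C1).card + (S2 \ C2).card := by
    rw [hVU, Finset.card_union_of_disjoint hVdisj]
  -- edge superadditivity
  have hEsub1 : ES Γ S1 C1 ⊆ ES Γ (S1 ∪ S2) C := by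
    rintro e ⟨hE, hA, x, hxe, hxS, hxC⟩
    refine ⟨hE, fun y hy => Finset.mem_union_left _ (hA y hy), x, hxe,
      Finset.mem_union_left _ hxS, fun hxC' => hxC ?_⟩
    rw [hC1def]
    exact Finset.mem_inter.2 ⟨hxC', hxS⟩
  have hEsub2 : ES Γ S2 C2 ⊆ ES Γ (S1 ∪ S2) C := by
    rintro e ⟨hE, hA, x, hxe, hxS, hxC⟩
    refine ⟨hE, fun y hy => Finset.mem_union_right _ (hA y hy), x, hxe,
      Finset.mem_union_right _ hxS, fun hxC' => hxC ?_⟩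
    rw [hC2def]
    exact Finset.mem_inter.2 ⟨Finset.mem_union_left _ hxC', hxS⟩
  have hEdisj : Disjoint (ES Γ S1 C1) (ES Γ S2 C2) := by
    rw [Set.disjoint_left]
    rintro e ⟨hE, hA, _⟩ ⟨hE', hA', x, hxe, hxS2, hxC2⟩
    apply hxC2
    rw [hC2def]
    exact Finset.mem_inter.2 ⟨Finset.mem_union_right _ (hA x hxe), hxS2⟩
  have hEcard : edgeCount Γ S1 C1 + edgeCount Γ S2 C2 ≤ edgeCount Γ (S1 ∪ S2) C := by
    rw [edgeCount_eq_ncard, edgeCount_eq_ncard, edgeCount_eq_ncard,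
      ← Set.ncard_union_eq hEdisj (Set.toFinite _) (Set.toFinite _)]
    exact Set.ncard_le_ncard (Set.union_subset hEsub1 hEsub2) (Set.toFinite _)
  have hmain : fW Γ (3/5) (S1 ∪ S2) C ≤ fW Γ (3/5) S1 C1 + fW Γ (3/5) S2 C2 := by
    have hcast : (edgeCount Γ S1 C1 : ℝ) + (edgeCount Γ S2 C2 : ℝ)
        ≤ (edgeCount Γ (S1 ∪ S2) C : ℝ) := by exact_mod_cast hEcard
    simp only [fW, hVcard]
    push_cast
    linarith
  -- C2 ≠ A2
  have hC2neA2 : C2 ≠ A2 := by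
    obtain ⟨v, hv⟩ := hne
    obtain ⟨hv1, hv2⟩ := Finset.mem_inter.1 hv
    obtain ⟨hv1S, hv1A⟩ := Finset.mem_sdiff.1 hv1
    obtain ⟨hv2S, hv2A⟩ := Finset.mem_sdiff.1 hv2
    intro h
    apply hv2A
    rw [← h, hC2def]
    exact Finset.mem_inter.2 ⟨Finset.mem_union_right _ hv1S, hv2S⟩
  by_cases h1 : C1 = S1
  · -- S1 ⊆ C; then C2 ≠ S2 and flip on side 2
    have hS1C : S1 ⊆ C := by
      rw [hC1def] at h1
      exact Finset.inter_eq_right.1 h1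
    have hC2neS2 : C2 ≠ S2 := by
      intro h
      rw [hC2def] at h
      have hS2C : S2 ⊆ C ∪ S1 := Finset.inter_eq_right.1 h
      have : S1 ∪ S2 ⊆ C := by
        refine Finset.union_subset hS1C (hS2C.trans ?_)
        exact Finset.union_subset (Finset.Subset.refl C) hS1C
      exact hCS.not_subset this
    have hflip := fW_flip_neg hn2 hA2C2 hC2S2 hC2neA2 hC2neS2
    have h0 : fW Γ (3/5) S1 C1 = 0 := by rw [h1]; exact fW_self _ _
    linarith
  · by_cases h2 : C1 = A1
    · by_cases h3 : C2 = S2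
      · -- hard case : S \ C = S1 \ A1, need a sixth edge
        have hD : (S1 ∪ S2) \ C = S1 \ A1 := by
          ext x
          simp only [Finset.mem_sdiff, Finset.mem_union]
          constructor
          · rintro ⟨hxS, hxC⟩
            have hxnA1 : x ∉ A1 := fun hxA1 => hxC (hA1C hxA1)
            rcases hxS with hx1 | hx2
            · exact ⟨hx1, hxnA1⟩
            · have hx2' : x ∈ C2 := h3.symm ▸ hx2
              rw [hC2def] at hx2'
              obtain ⟨hcs, _⟩ := Finset.mem_inter.1 hx2'
              rcases Finset.mem_union.1 hcs with h | h
              · exact absurd h hxC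
              · exact ⟨h, hxnA1⟩
          · rintro ⟨hx1, hxA1⟩
            refine ⟨Or.inl hx1, fun hxC => hxA1 ?_⟩
            have hx : x ∈ C1 := by
              rw [hC1def]; exact Finset.mem_inter.2 ⟨hxC, hx1⟩
            rw [h2] at hx
            exact hx
        -- find the extra edge
        obtain ⟨v, hv⟩ := hne
        obtain ⟨hvT1, hvT2⟩ := Finset.mem_inter.1 hv
        obtain ⟨w, hwA2, hwz, p, hsup⟩ := hp2 v hvT2
        have hvS1 : v ∈ (↑S1 : Set V) := Finset.mem_coe.2 (Finset.mem_sdiff.1 hvT1).1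
        have hwnS1 : w ∉ (↑S1 : Set V) := by
          intro hw
          have hw12 : w ∈ S1 ∩ S2 :=
            Finset.mem_inter.2 ⟨Finset.mem_coe.1 hw, hA2S2 hwA2⟩
          rw [hSS] at hw12
          rcases Finset.mem_union.1 hw12 with h | h
          · exact hwz (Finset.mem_singleton.1 h)
          · exact (Finset.mem_sdiff.1 (Finset.mem_inter.1 h).2).2 hwA2
        obtain ⟨d, hd, hdfst, hdsnd⟩ := p.exists_boundary_dart (↑S1) hvS1 hwnS1
        have hfsup := hsup d.fst (p.dart_fst_mem_support_of_mem_darts hd)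
        have hssup := hsup d.snd (p.dart_snd_mem_support_of_mem_darts hd)
        have hfstT : d.fst ∈ S1 \ A1 := by
          have h12 : d.fst ∈ S1 ∩ S2 :=
            Finset.mem_inter.2 ⟨Finset.mem_coe.1 hdfst, hfsup.1⟩
          rw [hSS] at h12
          rcases Finset.mem_union.1 h12 with h | h
          · exact absurd (Finset.mem_singleton.1 h) hfsup.2
          · exact (Finset.mem_inter.1 h).1
        have hfstC : d.fst ∉ C := by
          intro h
          have hx : d.fst ∈ C1 := by
            rw [hC1def]
            exact Finset.mem_inter.2 ⟨h, (Finset.mem_sdiff.1 hfstT).1⟩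
          rw [h2] at hx
          exact (Finset.mem_sdiff.1 hfstT).2 hx
        have hsndnS1 : d.snd ∉ S1 := fun h => hdsnd (Finset.mem_coe.2 h)
        have he0ES : s(d.fst, d.snd) ∈ ES Γ (S1 ∪ S2) C := by
          refine ⟨Γ.mem_edgeSet.2 d.adj, ?_, d.fst, Sym2.mem_mk_left _ _,
            Finset.mem_union_left _ (Finset.mem_coe.1 hdfst), hfstC⟩
          intro y hy
          rcases Sym2.mem_iff.1 hy with rfl | rfl
          · exact Finset.mem_union_left _ (Finset.mem_coe.1 hdfst)
          · exact Finset.mem_union_right _ hssup.1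
        have he0not : s(d.fst, d.snd) ∉ ES Γ S1 A1 := by
          rintro ⟨_, hA, _⟩
          exact hsndnS1 (hA d.snd (Sym2.mem_mk_right _ _))
        have hES1sub : ES Γ S1 A1 ⊆ ES Γ (S1 ∪ S2) C := by
          rintro e ⟨hE, hA, x, hxe, hxS, hxA⟩
          refine ⟨hE, fun y hy => Finset.mem_union_left _ (hA y hy), x, hxe,
            Finset.mem_union_left _ hxS, fun hxC => hxA ?_⟩
          have hx : x ∈ C1 := by
            rw [hC1def]; exact Finset.mem_inter.2 ⟨hxC, hxS⟩
          rw [h2] at hx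
          exact hx
        have hEcard6 : edgeCount Γ S1 A1 + 1 ≤ edgeCount Γ (S1 ∪ S2) C := by
          rw [edgeCount_eq_ncard, edgeCount_eq_ncard]
          calc (ES Γ S1 A1).ncard + 1
              = (insert (s(d.fst, d.snd)) (ES Γ S1 A1)).ncard :=
                (Set.ncard_insert_of_notMem he0not (Set.toFinite _)).symm
            _ ≤ (ES Γ (S1 ∪ S2) C).ncard :=
                Set.ncard_le_ncard (Set.insert_subset he0ES hES1sub) (Set.toFinite _)
        have hcast : (edgeCount Γ S1 A1 : ℝ) + 1 ≤ (edgeCount Γ (S1 ∪ S2) C : ℝ) := by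
          exact_mod_cast hEcard6
        have h5 := hn1.2
        simp only [fW, hc1] at h5
        show fW Γ (3/5) (S1 ∪ S2) C < 0
        simp only [fW, hD, hc1]
        push_cast at h5 ⊢
        linarith
      · have hflip2 := fW_flip_neg hn2 hA2C2 hC2S2 hC2neA2 h3
        have h0 : fW Γ (3/5) S1 C1 = 0 := by rw [h2]; exact hn1.2
        linarith
    · have hflip1 := fW_flip_neg hn1 hA1C1 hC1S1 h2 h1
      have hle2 : fW Γ (3/5) S2 C2 ≤ 0 := by
        by_cases h3 : C2 = S2
        · rw [h3]; exact le_of_eq (fW_self _ _)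
        · exact le_of_lt (fW_flip_neg hn2 hA2C2 hC2S2 hC2neA2 h3)
      linarith
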